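/- arXiv:2211.07871 — 2 statements merged into one kernel-verified Lean document; each statement's English description precedes it below -/
import Mathlib

section
/- (Disorder-invariance of DINER.) Suppose y, y' : Fin N → (Fin m → ℝ) have the same histogram of attributes, i.e., the multiset {y i : i ∈ Fin N} equals the multiset {y' i : i ∈ Fin N}. Then (a) the DINER losses L_y and L_{y'} attain exactly the same set of values over all (θ, H), and (b) a network parameter θ* admits some hash table H* making (θ*, H*) a global minimizer of L_y if and only if θ* admits some hash table making it a global minimizer of L_{y'}; that is, signals with the same histogram of attributes share the same set of optimal network parameters. -/
/-- The DINER loss. -/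
def dinerLoss {N p d m : ℕ}
    (f : (Fin p → ℝ) → (Fin d → ℝ) → (Fin m → ℝ))
    (ℓ : (Fin m → ℝ) → (Fin m → ℝ) → ℝ)
    (y : Fin N → (Fin m → ℝ))
    (θ : Fin p → ℝ) (H : Fin N → (Fin d → ℝ)) : ℝ :=
  ∑ i : Fin N, ℓ (f θ (H i)) (y i)

lemma exists_perm_of_hist {N m : ℕ} {y y' : Fin N → (Fin m → ℝ)}
    (hhist : Multiset.map y Finset.univ.val = Multiset.map y' Finset.univ.val) :
    ∃ σ : Equiv.Perm (Fin N), ∀ i, y i = y' (σ i) := by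
  classical
  have hcard : ∀ c : Fin m → ℝ,
      Fintype.card {i : Fin N // y i = c} = Fintype.card {i : Fin N // y' i = c} := by
    intro c
    have h1 := congrArg (Multiset.count c) hhist
    rw [Multiset.count_map, Multiset.count_map] at h1
    simpa [Fintype.card_subtype, Finset.card, Finset.filter_val, eq_comm] using h1
  have e : ∀ c : Fin m → ℝ, {i : Fin N // y i = c} ≃ {i : Fin N // y' i = c} :=
    fun c => Fintype.equivOfCardEq (hcard c)
  refine ⟨Equiv.ofFiberEquiv e, fun i => (Equiv.ofFiberEquiv_map e i).symm⟩

lemma dinerLoss_perm {N p d m : ℕ}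
    (f : (Fin p → ℝ) → (Fin d → ℝ) → (Fin m → ℝ))
    (ℓ : (Fin m → ℝ) → (Fin m → ℝ) → ℝ)
    (y : Fin N → (Fin m → ℝ)) (σ : Equiv.Perm (Fin N))
    (θ : Fin p → ℝ) (H : Fin N → (Fin d → ℝ)) :
    dinerLoss f ℓ (y ∘ σ) θ H = dinerLoss f ℓ y θ (H ∘ σ.symm) := by
  unfold dinerLoss
  rw [← Equiv.sum_comp σ (fun i => ℓ (f θ ((H ∘ σ.symm) i)) (y i))]
  simp [Function.comp]

/-- Disorder-invariance of DINER: signals with the same histogram of attributes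
(a) yield DINER losses attaining the same set of values, and (b) share the same
set of optimal network parameters. -/
theorem dinerLoss_disorder_invariant {N p d m : ℕ}
    (f : (Fin p → ℝ) → (Fin d → ℝ) → (Fin m → ℝ))
    (ℓ : (Fin m → ℝ) → (Fin m → ℝ) → ℝ)
    (y y' : Fin N → (Fin m → ℝ))
    (hhist : Multiset.map y Finset.univ.val = Multiset.map y' Finset.univ.val) :
    ({v : ℝ | ∃ (θ : Fin p → ℝ) (H : Fin N → (Fin d → ℝ)),
        dinerLoss f ℓ y θ H = v} =
      {v : ℝ | ∃ (θ : Fin p → ℝ) (H : Fin N → (Fin d → ℝ)),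
        dinerLoss f ℓ y' θ H = v}) ∧
    ∀ θstar : Fin p → ℝ,
      ((∃ Hstar : Fin N → (Fin d → ℝ),
          ∀ (θ : Fin p → ℝ) (H : Fin N → (Fin d → ℝ)),
            dinerLoss f ℓ y θstar Hstar ≤ dinerLoss f ℓ y θ H) ↔
        (∃ Hstar : Fin N → (Fin d → ℝ),
          ∀ (θ : Fin p → ℝ) (H : Fin N → (Fin d → ℝ)),
            dinerLoss f ℓ y' θstar Hstar ≤ dinerLoss f ℓ y' θ H)) := by
  obtain ⟨σ, hσ⟩ := exists_perm_of_hist hhist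
  have hy : y = y' ∘ σ := funext hσ
  subst hy
  have key : ∀ (θ : Fin p → ℝ) (H : Fin N → (Fin d → ℝ)),
      dinerLoss f ℓ (y' ∘ σ) θ H = dinerLoss f ℓ y' θ (H ∘ σ.symm) :=
    dinerLoss_perm f ℓ y' σ
  have key2 : ∀ (θ : Fin p → ℝ) (H : Fin N → (Fin d → ℝ)),
      dinerLoss f ℓ y' θ H = dinerLoss f ℓ (y' ∘ σ) θ (H ∘ σ) := by
    intro θ H
    rw [key]
    congr 1
    ext i
    simp
  constructor
  · ext v
    simp only [Set.mem_setOf_eq]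
    constructor
    · rintro ⟨θ, H, rfl⟩; exact ⟨θ, H ∘ σ.symm, (key θ H).symm⟩
    · rintro ⟨θ, H, rfl⟩; exact ⟨θ, H ∘ σ, (key2 θ H).symm⟩
  · intro θstar
    constructor
    · rintro ⟨Hstar, hmin⟩
      refine ⟨Hstar ∘ σ.symm, fun θ H => ?_⟩
      rw [← key, key2 θ H]
      exact hmin θ (H ∘ σ)
    · rintro ⟨Hstar, hmin⟩
      refine ⟨Hstar ∘ σ, fun θ H => ?_⟩
      rw [key, key]
      have hc : (Hstar ∘ σ) ∘ σ.symm = Hstar := by ext i j; simp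
      rw [hc]
      exact hmin θ (H ∘ σ.symm)
end

section
/- (One gradient-descent step is equivariant under re-arrangement of the signal.) In the setting where L_y is differentiable on E = EuclideanSpace ℝ (Fin p) × (Fin N → EuclideanSpace ℝ (Fin d)), fix a learning rate η > 0 and define the gradient-descent update G_y(θ, H) = (θ, H) − η • grad L_y(θ, H). Then for every permutation σ : Fin N ≃ Fin N and every (θ, H), writing G_y(θ, H) = (θ⁺, H⁺), one has G_{y∘σ}(θ, H∘σ) = (θ⁺, H⁺∘σ). -/
noncomputable section

/-- The product Hilbert space `E` of network parameters and hash tables. -/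
abbrev DinerParamSpace (p N d : ℕ) :=
  WithLp 2 ((EuclideanSpace ℝ (Fin p)) × (PiLp 2 fun _ : Fin N => EuclideanSpace ℝ (Fin d)))

/-- The DINER loss as a function on the product Hilbert space. -/
def dinerLossE {N p d m : ℕ}
    (f : EuclideanSpace ℝ (Fin p) → EuclideanSpace ℝ (Fin d) → (Fin m → ℝ))
    (ℓ : (Fin m → ℝ) → (Fin m → ℝ) → ℝ)
    (y : Fin N → (Fin m → ℝ)) (x : DinerParamSpace p N d) : ℝ :=
  ∑ i : Fin N, ℓ (f x.fst (x.snd i)) (y i)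

/-- One gradient-descent step with learning rate `η` for the DINER loss. -/
def dinerGradStep {N p d m : ℕ}
    (f : EuclideanSpace ℝ (Fin p) → EuclideanSpace ℝ (Fin d) → (Fin m → ℝ))
    (ℓ : (Fin m → ℝ) → (Fin m → ℝ) → ℝ)
    (y : Fin N → (Fin m → ℝ)) (η : ℝ)
    (x : DinerParamSpace p N d) : DinerParamSpace p N d :=
  x - η • gradient (dinerLossE f ℓ y) x

/-! The loss of the permuted signal is the original loss precomposed with the permutation of
hash-table slots, a linear isometry of `E`. Gradients pull back along a linear isometry by its
inverse, so the gradient of the permuted loss at the permuted point is the permuted gradient,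
and the whole update commutes with the permutation. -/

open InnerProductSpace

theorem gradient_comp_linearIsometryEquiv {𝕜 E F : Type*} [RCLike 𝕜]
    [NormedAddCommGroup E] [InnerProductSpace 𝕜 E] [CompleteSpace E]
    [NormedAddCommGroup F] [InnerProductSpace 𝕜 F] [CompleteSpace F]
    (g : F → 𝕜) (e : E ≃ₗᵢ[𝕜] F) (x : E) :
    gradient (g ∘ e) x = e.symm (gradient g (e x)) := by
  apply (toDual 𝕜 E).injective
  ext v
  rw [toDual_gradient]
  change fderiv 𝕜 (g ∘ e.toContinuousLinearEquiv) x v = _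
  rw [ContinuousLinearEquiv.comp_right_fderiv, toDual_apply_apply,
    ContinuousLinearMap.comp_apply, ← inner_gradient_left,
    ← e.inner_map_map, LinearIsometryEquiv.apply_symm_apply]
  rfl

namespace DinerParamSpace

variable {p N d : ℕ}

def permSlots (σ : Equiv.Perm (Fin N)) :
    DinerParamSpace p N d ≃ₗᵢ[ℝ] DinerParamSpace p N d :=
  LinearIsometryEquiv.withLpProdCongr 2 (LinearIsometryEquiv.refl ℝ _)
    (LinearIsometryEquiv.piLpCongrLeft 2 ℝ (EuclideanSpace ℝ (Fin d)) σ.symm)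

@[simp]
theorem permSlots_apply (σ : Equiv.Perm (Fin N)) (x : DinerParamSpace p N d) :
    permSlots σ x = WithLp.toLp 2 (x.fst, WithLp.toLp 2 fun i => x.snd (σ i)) :=
  rfl

theorem permSlots_symm (σ : Equiv.Perm (Fin N)) :
    (permSlots σ).symm = (permSlots σ.symm : DinerParamSpace p N d ≃ₗᵢ[ℝ] _) := by
  ext x : 1
  simp [permSlots, LinearIsometryEquiv.piLpCongrLeft_symm]
  rfl

end DinerParamSpace

open DinerParamSpace

theorem dinerLossE_comp_perm {N p d m : ℕ}
    (f : EuclideanSpace ℝ (Fin p) → EuclideanSpace ℝ (Fin d) → (Fin m → ℝ))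
    (ℓ : (Fin m → ℝ) → (Fin m → ℝ) → ℝ) (y : Fin N → (Fin m → ℝ)) (σ : Equiv.Perm (Fin N)) :
    dinerLossE f ℓ (y ∘ σ) = dinerLossE f ℓ y ∘ permSlots σ.symm := by
  funext x
  simp only [dinerLossE, Function.comp_apply, permSlots_apply]
  conv_rhs => rw [← Equiv.sum_comp σ]
  simp only [WithLp.toLp_fst, WithLp.toLp_snd, Equiv.symm_apply_apply]

theorem gradient_dinerLossE_comp_perm {N p d m : ℕ}
    (f : EuclideanSpace ℝ (Fin p) → EuclideanSpace ℝ (Fin d) → (Fin m → ℝ))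
    (ℓ : (Fin m → ℝ) → (Fin m → ℝ) → ℝ) (y : Fin N → (Fin m → ℝ))
    (σ : Equiv.Perm (Fin N)) (x : DinerParamSpace p N d) :
    gradient (dinerLossE f ℓ (y ∘ σ)) (permSlots σ x) =
      permSlots σ (gradient (dinerLossE f ℓ y) x) := by
  rw [dinerLossE_comp_perm, gradient_comp_linearIsometryEquiv, ← permSlots_symm,
    LinearIsometryEquiv.symm_symm, LinearIsometryEquiv.symm_apply_apply]

theorem dinerGradStep_permSlots {N p d m : ℕ}
    (f : EuclideanSpace ℝ (Fin p) → EuclideanSpace ℝ (Fin d) → (Fin m → ℝ))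
    (ℓ : (Fin m → ℝ) → (Fin m → ℝ) → ℝ) (y : Fin N → (Fin m → ℝ)) (η : ℝ)
    (σ : Equiv.Perm (Fin N)) (x : DinerParamSpace p N d) :
    dinerGradStep f ℓ (y ∘ σ) η (permSlots σ x) = permSlots σ (dinerGradStep f ℓ y η x) := by
  rw [dinerGradStep, dinerGradStep, gradient_dinerLossE_comp_perm, map_sub, map_smul]

theorem dinerGradStep_comp_perm_general {N p d m : ℕ}
    (f : EuclideanSpace ℝ (Fin p) → EuclideanSpace ℝ (Fin d) → (Fin m → ℝ))
    (ℓ : (Fin m → ℝ) → (Fin m → ℝ) → ℝ)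
    (y : Fin N → (Fin m → ℝ))
    (η : ℝ)
    (σ : Equiv.Perm (Fin N))
    (θ : EuclideanSpace ℝ (Fin p))
    (H : PiLp 2 fun _ : Fin N => EuclideanSpace ℝ (Fin d)) :
    dinerGradStep f ℓ (y ∘ σ) η (WithLp.toLp 2 (θ, WithLp.toLp 2 (fun i => H (σ i))) : DinerParamSpace p N d) =
      WithLp.toLp 2 ((dinerGradStep f ℓ y η (WithLp.toLp 2 (θ, H) : DinerParamSpace p N d)).fst,
        WithLp.toLp 2 (fun i => (dinerGradStep f ℓ y η (WithLp.toLp 2 (θ, H) : DinerParamSpace p N d)).snd (σ i))) :=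
  dinerGradStep_permSlots f ℓ y η σ (WithLp.toLp 2 (θ, H))

/-- One gradient-descent step is equivariant under re-arrangement of the signal:
if `G_y (θ, H) = (θ⁺, H⁺)` then `G_{y∘σ} (θ, H∘σ) = (θ⁺, H⁺∘σ)`. -/
theorem dinerGradStep_comp_perm {N p d m : ℕ}
    (f : EuclideanSpace ℝ (Fin p) → EuclideanSpace ℝ (Fin d) → (Fin m → ℝ))
    (ℓ : (Fin m → ℝ) → (Fin m → ℝ) → ℝ)
    (y : Fin N → (Fin m → ℝ))
    (hdiff : ∀ i : Fin N,
      Differentiable ℝ (fun q : (EuclideanSpace ℝ (Fin p)) × (EuclideanSpace ℝ (Fin d)) =>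
        ℓ (f q.1 q.2) (y i)))
    (η : ℝ) (hη : 0 < η)
    (σ : Equiv.Perm (Fin N))
    (θ : EuclideanSpace ℝ (Fin p))
    (H : PiLp 2 fun _ : Fin N => EuclideanSpace ℝ (Fin d)) :
    dinerGradStep f ℓ (y ∘ σ) η (WithLp.toLp 2 (θ, WithLp.toLp 2 (fun i => H (σ i))) : DinerParamSpace p N d) =
      WithLp.toLp 2 ((dinerGradStep f ℓ y η (WithLp.toLp 2 (θ, H) : DinerParamSpace p N d)).fst,
        WithLp.toLp 2 (fun i => (dinerGradStep f ℓ y η (WithLp.toLp 2 (θ, H) : DinerParamSpace p N d)).snd (σ i))) :=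
  dinerGradStep_comp_perm_general f ℓ y η σ θ H
end
end
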